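/- For all nonempty metric spaces X and Y with D(X,Y) < ∞, one has d̂(X,Y) ≤ e^{2·D(X,Y)} − e^{D(X,Y)}. -/

import Mathlib

open ENNReal

/-- `f` is an `(A,B)`-quasi-isometric embedding. -/
def QIEmb {X Y : Type*} [MetricSpace X] [MetricSpace Y] (A B : ℝ) (f : X → Y) : Prop :=
  ∀ x x' : X, (1 / A) * dist x x' - B ≤ dist (f x) (f x') ∧
    dist (f x) (f x') ≤ A * dist x x' + B

/-- `X` and `Y` are `(A,B,C)`-quasi-isometric. -/
def QuasiIsometric (X Y : Type*) [MetricSpace X] [MetricSpace Y] (A B C : ℝ) : Prop :=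
  ∃ (f : X → Y) (g : Y → X), QIEmb A B f ∧ QIEmb A B g ∧
    (∀ x : X, dist (g (f x)) x ≤ C) ∧ (∀ y : Y, dist (f (g y)) y ≤ C)

/-- The quasi-isometric distance `d̂`. -/
noncomputable def qiDist (X Y : Type*) [MetricSpace X] [MetricSpace Y] : ℝ≥0∞ :=
  sInf {e : ℝ≥0∞ | ∃ r : ℝ, 0 < r ∧ e = ENNReal.ofReal r ∧ QuasiIsometric X Y (1 + r) r r}

/-- A correspondence between X and Y: both projections are surjective. -/
def IsCorrespondence {X Y : Type*} (R : Set (X × Y)) : Prop :=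
  (∀ x : X, ∃ y : Y, (x, y) ∈ R) ∧ (∀ y : Y, ∃ x : X, (x, y) ∈ R)

/-- The quasi-isometric distortion of a correspondence, in [0,∞]. -/
noncomputable def qDis {X Y : Type*} [MetricSpace X] [MetricSpace Y]
    (R : Set (X × Y)) : ℝ≥0∞ :=
  sInf {e : ℝ≥0∞ | ∃ r : ℝ, 0 < r ∧ e = ENNReal.ofReal r ∧
    ∀ p ∈ R, ∀ q ∈ R,
      Real.exp (-r) * dist p.2 q.2 - Real.exp r + 1 ≤ dist p.1 q.1 ∧
      dist p.1 q.1 ≤ Real.exp r * dist p.2 q.2 + Real.exp (2 * r) - Real.exp r}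

/-- The distance D, infimum of quasi-isometric distortions of correspondences. -/
noncomputable def Ddist (X Y : Type*) [MetricSpace X] [MetricSpace Y] : ℝ≥0∞ :=
  ⨅ R : {R : Set (X × Y) // IsCorrespondence R}, qDis R.1

/-! The distortion condition at `r` says, with `E = e^r` and `ρ = e^{2r} - e^r = E (E - 1)`, that
`d_X ≤ E d_Y + ρ` and, after multiplying its lower half by `E`, `d_Y ≤ E d_X + ρ`. This
condition is symmetric in `X` and `Y`, and since `E ≤ 1 + ρ` (as `(E - 1)² ≥ 0`) it makes
any pair of sections of the correspondence a `(1 + ρ, ρ, ρ)`-quasi-isometry. Finally `ρ` is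
monotone and continuous in `r`, so letting `r` decrease to `D(X,Y)` gives the bound. -/

open Real Filter Topology

noncomputable def expGap (r : ℝ) : ℝ := exp (2 * r) - exp r

lemma expGap_eq_mul (r : ℝ) : expGap r = exp r * (exp r - 1) := by
  rw [expGap, two_mul, exp_add]; ring

lemma expGap_pos {r : ℝ} (hr : 0 < r) : 0 < expGap r := by
  rw [expGap_eq_mul]
  exact mul_pos (exp_pos r) (sub_pos.2 (one_lt_exp_iff.2 hr))

lemma exp_le_one_add_expGap (r : ℝ) : exp r ≤ 1 + expGap r := by
  rw [expGap_eq_mul]; nlinarith [sq_nonneg (exp r - 1)]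

lemma monotoneOn_expGap : MonotoneOn expGap (Set.Ici 0) := by
  intro r hr s _ hrs
  simp only [expGap_eq_mul]
  have hr1 : 0 ≤ exp r - 1 := sub_nonneg.2 (one_le_exp hr)
  gcongr

lemma continuous_expGap : Continuous expGap := by
  unfold expGap; fun_prop

lemma exp_neg_mul_sub_exp_add_one_le_iff {r a b : ℝ} :
    exp (-r) * b - exp r + 1 ≤ a ↔ b ≤ exp r * a + expGap r := by
  rw [← mul_le_mul_iff_of_pos_left (exp_pos r), expGap, two_mul, exp_add,
    mul_add, mul_sub, ← mul_assoc, ← exp_add, add_neg_cancel, exp_zero]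
  constructor <;> intro h <;> linarith

lemma QIEmb.of_le_mul_add {X Y : Type*} [MetricSpace X] [MetricSpace Y] {A B : ℝ}
    (hA : 1 ≤ A) (hB : 0 ≤ B) {f : X → Y}
    (hf : ∀ x x', dist (f x) (f x') ≤ A * dist x x' + B ∧ dist x x' ≤ A * dist (f x) (f x') + B) :
    QIEmb A B f := by
  intro x x'
  refine ⟨?_, (hf x x').1⟩
  have hA0 : 0 < A := by linarith
  have hBA : B / A ≤ B := div_le_self hB hA
  calc 1 / A * dist x x' - B ≤ 1 / A * (A * dist (f x) (f x') + B) - B := by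
        gcongr; exact (hf x x').2
    _ = dist (f x) (f x') + B / A - B := by field_simp
    _ ≤ dist (f x) (f x') := by linarith

lemma IsCorrespondence.quasiIsometric {X Y : Type*} [MetricSpace X] [MetricSpace Y]
    {R : Set (X × Y)} (hR : IsCorrespondence R) {A B : ℝ} (hA : 1 ≤ A) (hB : 0 ≤ B)
    (hdist : ∀ p ∈ R, ∀ q ∈ R, dist p.1 q.1 ≤ A * dist p.2 q.2 + B ∧
      dist p.2 q.2 ≤ A * dist p.1 q.1 + B) :
    QuasiIsometric X Y A B B := by
  choose f hf using hR.1
  choose g hg using hR.2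
  refine ⟨f, g, QIEmb.of_le_mul_add hA hB fun x x' => ?_,
    QIEmb.of_le_mul_add hA hB fun y y' => ?_, fun x => ?_, fun y => ?_⟩
  · exact (hdist _ (hf x) _ (hf x')).symm
  · exact hdist _ (hg y) _ (hg y')
  · simpa using (hdist _ (hg (f x)) _ (hf x)).1
  · simpa using (hdist _ (hf (g y)) _ (hg y)).2

lemma qiDist_le_expGap_of_distortion {X Y : Type*} [MetricSpace X] [MetricSpace Y]
    {R : Set (X × Y)} (hR : IsCorrespondence R) {r : ℝ} (hr : 0 < r)
    (hdis : ∀ p ∈ R, ∀ q ∈ R,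
      exp (-r) * dist p.2 q.2 - exp r + 1 ≤ dist p.1 q.1 ∧
      dist p.1 q.1 ≤ exp r * dist p.2 q.2 + exp (2 * r) - exp r) :
    qiDist X Y ≤ ENNReal.ofReal (expGap r) := by
  have hρ := expGap_pos hr
  have hE := exp_le_one_add_expGap r
  refine sInf_le ⟨expGap r, hρ, rfl, hR.quasiIsometric (by linarith) hρ.le fun p hp q hq => ?_⟩
  obtain ⟨hlow, hhigh⟩ := hdis p hp q hq
  rw [exp_neg_mul_sub_exp_add_one_le_iff] at hlow
  constructor
  · calc dist p.1 q.1 ≤ exp r * dist p.2 q.2 + expGap r := by rw [expGap]; linarith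
      _ ≤ (1 + expGap r) * dist p.2 q.2 + expGap r := by gcongr
  · calc dist p.2 q.2 ≤ exp r * dist p.1 q.1 + expGap r := hlow
      _ ≤ (1 + expGap r) * dist p.1 q.1 + expGap r := by gcongr

lemma qiDist_le_expGap_of_Ddist_lt {X Y : Type*} [MetricSpace X] [MetricSpace Y] {s : ℝ}
    (hs : Ddist X Y < ENNReal.ofReal s) : qiDist X Y ≤ ENNReal.ofReal (expGap s) := by
  obtain ⟨⟨R, hR⟩, hRs⟩ := iInf_lt_iff.1 hs
  obtain ⟨_, ⟨r, hr, rfl, hdis⟩, hrs⟩ := sInf_lt_iff.1 hRs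
  have hrs : r < s := (ENNReal.ofReal_lt_ofReal_iff_of_nonneg hr.le).1 hrs
  calc qiDist X Y ≤ ENNReal.ofReal (expGap r) := qiDist_le_expGap_of_distortion hR hr hdis
    _ ≤ ENNReal.ofReal (expGap s) := ENNReal.ofReal_le_ofReal <|
        monotoneOn_expGap (Set.mem_Ici.2 hr.le) (Set.mem_Ici.2 (hr.le.trans hrs.le)) hrs.le

theorem qiDist_le_exp_Ddist_general
    (X Y : Type*) [MetricSpace X] [MetricSpace Y]
    (hfin : Ddist X Y < ⊤) :
    qiDist X Y ≤
      ENNReal.ofReal (Real.exp (2 * (Ddist X Y).toReal) - Real.exp ((Ddist X Y).toReal)) := by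
  set d := (Ddist X Y).toReal
  have hD : Ddist X Y = ENNReal.ofReal d := (ENNReal.ofReal_toReal hfin.ne).symm
  have hlim : Tendsto (fun s => ENNReal.ofReal (expGap s)) (𝓝[>] d)
      (𝓝 (ENNReal.ofReal (expGap d))) :=
    (ENNReal.continuous_ofReal.comp continuous_expGap).continuousAt.tendsto.mono_left
      nhdsWithin_le_nhds
  refine ge_of_tendsto hlim (eventually_nhdsWithin_of_forall fun s (hs : d < s) => ?_)
  refine qiDist_le_expGap_of_Ddist_lt ?_
  rw [hD]
  exact (ENNReal.ofReal_lt_ofReal_iff (ENNReal.toReal_nonneg.trans_lt hs)).2 hs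

/-- d̂(X,Y) ≤ e^{2·D(X,Y)} − e^{D(X,Y)} whenever D(X,Y) is finite. -/
theorem qiDist_le_exp_Ddist
    (X Y : Type*) [MetricSpace X] [MetricSpace Y] [Nonempty X] [Nonempty Y]
    (hfin : Ddist X Y < ⊤) :
    qiDist X Y ≤
      ENNReal.ofReal (Real.exp (2 * (Ddist X Y).toReal) - Real.exp ((Ddist X Y).toReal)) :=
  qiDist_le_exp_Ddist_general X Y hfin
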